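/- arXiv:2002.10335 — 2 statements merged into one kernel-verified Lean document; each statement's English description precedes it below -/
import Mathlib

section
/- A subset G ⊆ X × X is c-cyclically monotone if and only if every simple move M with {M > 0} ⊆ G has nonpositive c-cost c(M) = ∑_{x,y} c(x,y) M(x,y). -/
/-!
A simple move has as many `+1` as `-1` entries in every row and every column. Matching them
row-wise (`φ`) and column-wise (`ψ`), the permutation `ψ⁻¹ ∘ φ` of the `+1` entries shifts their
second coordinates exactly onto the `-1` entries, so cyclic monotonicity says that the cost of
the move is nonpositive.

Conversely, for `(x_i, y_i) ∈ G` and `σ`, the multiplicity matrix of the pairs `(x_i, y_i)` minus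
that of the pairs `(x_i, y_{σ i})` is an integer matrix `D` with zero row and column sums,
positive only on `G`, whose cost is the difference of the two sides. Going from a row to a
positive entry in it and then, along that column, to a negative entry, a periodic orbit of this
walk is an alternating cycle; its `±1` indicator is a simple move conformal to `D`, and peeling it
off decreases `∑ |D|`, which gives an induction.
-/

/-- `G` is cyclically monotone for the cost `c`. -/
def CyclicallyMonotone {X : Type*} (c : X → X → ℝ) (G : Set (X × X)) : Prop :=
  ∀ (k : ℕ) (f : Fin k → X × X), (∀ i, f i ∈ G) →
    ∀ σ : Equiv.Perm (Fin k), ∑ i, c (f i).1 (f i).2 ≤ ∑ i, c (f i).1 (f (σ i)).2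

open Finset Function

section PointCount

variable {ι X Y : Type*} [DecidableEq X] [DecidableEq Y]

def pointCount (s : Finset ι) (p : ι → X × Y) (z : X × Y) : ℕ := #{i ∈ s | p i = z}

variable (s : Finset ι) (p : ι → X × Y)

theorem sum_pointCount_fst [Fintype Y] (x : X) :
    ∑ y, pointCount s p (x, y) = #{i ∈ s | (p i).1 = x} := by
  rw [card_eq_sum_card_fiberwise (f := fun i => (p i).2) (t := univ) (fun _ _ => mem_univ _)]
  simp only [pointCount, filter_filter, Prod.ext_iff]

theorem sum_pointCount_snd [Fintype X] (y : Y) :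
    ∑ x, pointCount s p (x, y) = #{i ∈ s | (p i).2 = y} := by
  rw [card_eq_sum_card_fiberwise (f := fun i => (p i).1) (t := univ) (fun _ _ => mem_univ _)]
  simp only [pointCount, filter_filter, Prod.ext_iff, and_comm]

theorem sum_sum_mul_pointCount [Fintype X] [Fintype Y] {R : Type*} [CommSemiring R]
    (c : X → Y → R) :
    ∑ x, ∑ y, c x y * pointCount s p (x, y) = ∑ i ∈ s, c (p i).1 (p i).2 := by
  rw [← sum_fiberwise s p, ← Fintype.sum_prod_type']
  refine sum_congr rfl fun z _ => ?_
  rw [sum_congr rfl fun i hi => by rw [(mem_filter.1 hi).2], sum_const, nsmul_eq_mul, mul_comm]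
  rfl

theorem pointCount_le_one (hp : Set.InjOn p s) (z : X × Y) : pointCount s p z ≤ 1 :=
  card_le_one.2 fun _ hi _ hj =>
    hp (mem_filter.1 hi).1 (mem_filter.1 hj).1
      ((mem_filter.1 hi).2.trans (mem_filter.1 hj).2.symm)

theorem exists_eq_of_pointCount_pos {z : X × Y} (h : 0 < pointCount s p z) :
    ∃ i ∈ s, p i = z :=
  filter_nonempty_iff.1 (card_pos.1 h)

end PointCount

structure IsSimpleMove {X Y R : Type*} [Fintype X] [Fintype Y] [Ring R] (M : X → Y → R) :
    Prop where
  mem : ∀ x y, M x y = -1 ∨ M x y = 0 ∨ M x y = 1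
  row_sum : ∀ x, ∑ y, M x y = 0
  col_sum : ∀ y, ∑ x, M x y = 0

theorem IsSimpleMove.intCast {X Y R : Type*} [Fintype X] [Fintype Y] [Ring R] {M : X → Y → ℤ}
    (hM : IsSimpleMove M) : IsSimpleMove fun x y => (M x y : R) where
  mem x y := by rcases hM.mem x y with h | h | h <;> simp [h]
  row_sum x := by rw [← Int.cast_sum, hM.row_sum x, Int.cast_zero]
  col_sum y := by rw [← Int.cast_sum, hM.col_sum y, Int.cast_zero]

def IsConformal {X Y : Type*} (M D : X → Y → ℤ) : Prop :=
  ∀ x y, (0 < M x y → 0 < D x y) ∧ (M x y < 0 → D x y < 0)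

section Cycle

variable {ι X Y : Type*} [Fintype X] [Fintype Y] [DecidableEq X] [DecidableEq Y]
  {C : Finset ι} {row : ι → X} {next : ι → ι} (col : ι → Y)

theorem isSimpleMove_of_cycle (hrow : Set.InjOn row C) (hnext : Set.BijOn next C C) :
    IsSimpleMove fun x y => (pointCount C (fun i => (row i, col i)) (x, y) : ℤ) -
      pointCount C (fun i => (row (next i), col i)) (x, y) where
  mem x y := by
    have hpos := pointCount_le_one C (fun i => (row i, col i))
      (fun i hi j hj h => hrow hi hj (Prod.ext_iff.1 h).1) (x, y)
    have hneg := pointCount_le_one C (fun i => (row (next i), col i))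
      (fun i hi j hj h => hnext.injOn hi hj (hrow (hnext.mapsTo hi) (hnext.mapsTo hj)
        (Prod.ext_iff.1 h).1)) (x, y)
    omega
  row_sum x := by
    have hcard : #{i ∈ C | row (next i) = x} = #{i ∈ C | row i = x} :=
      card_nbij next
        (fun i hi => mem_filter.2 ⟨hnext.mapsTo (mem_filter.1 hi).1, (mem_filter.1 hi).2⟩)
        (hnext.injOn.mono fun i hi => (mem_filter.1 hi).1) (fun j hj => by
          obtain ⟨i, hi, rfl⟩ := hnext.surjOn (mem_filter.1 hj).1
          exact ⟨i, by simp_all⟩)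
    simp only [sum_sub_distrib, ← Nat.cast_sum, sum_pointCount_fst, hcard, sub_self]
  col_sum y := by
    simp only [sum_sub_distrib, ← Nat.cast_sum, sum_pointCount_snd, sub_self]

theorem exists_conformal_of_cycle (hC : C.Nonempty) (hrow : Set.InjOn row C)
    (hnext : Set.BijOn next C C) {D : X → Y → ℤ} (hpos : ∀ i ∈ C, 0 < D (row i) (col i))
    (hneg : ∀ i ∈ C, D (row (next i)) (col i) < 0) :
    ∃ M : X → Y → ℤ, IsSimpleMove M ∧ M ≠ 0 ∧ IsConformal M D := by
  refine ⟨_, isSimpleMove_of_cycle col hrow hnext, ?_, fun x y => ⟨fun h => ?_, fun h => ?_⟩⟩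
  · obtain ⟨i, hi⟩ := hC
    have hnone : pointCount C (fun i => (row (next i), col i)) (row i, col i) = 0 := by
      by_contra h
      obtain ⟨j, hj, hji⟩ := exists_eq_of_pointCount_pos C _ (Nat.pos_of_ne_zero h)
      have := hneg j hj
      simp only [Prod.ext_iff] at hji
      exact (hpos i hi).not_gt (hji.1 ▸ hji.2 ▸ this)
    have hone : 0 < pointCount C (fun i => (row i, col i)) (row i, col i) :=
      card_pos.2 ⟨i, mem_filter.2 ⟨hi, rfl⟩⟩
    intro h
    have := congr_fun₂ h (row i) (col i)
    simp only [hnone, Pi.zero_apply] at this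
    omega
  · obtain ⟨i, hi, hix⟩ := exists_eq_of_pointCount_pos C (fun i => (row i, col i))
      (z := (x, y)) (by dsimp only at h; omega)
    simp only [Prod.ext_iff] at hix
    exact hix.1 ▸ hix.2 ▸ hpos i hi
  · obtain ⟨i, hi, hix⟩ := exists_eq_of_pointCount_pos C (fun i => (row (next i), col i))
      (z := (x, y)) (by dsimp only at h; omega)
    simp only [Prod.ext_iff] at hix
    exact hix.1 ▸ hix.2 ▸ hneg i hi

end Cycle

theorem Function.periodicPts_nonempty {α : Type*} [Finite α] [Nonempty α] (f : α → α) :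
    (periodicPts f).Nonempty := by
  obtain ⟨a⟩ := ‹Nonempty α›
  obtain ⟨m, n, hmn, h⟩ := Finite.exists_ne_map_eq_of_infinite fun n => f^[n] a
  wlog hlt : m < n generalizing m n
  · exact this n m hmn.symm h.symm (by omega)
  refine ⟨f^[m] a, n - m, by omega, ?_⟩
  rw [IsPeriodicPt, IsFixedPt, ← iterate_add_apply, Nat.sub_add_cancel hlt.le]
  exact h.symm

theorem exists_isSimpleMove_conformal {X Y : Type*} [Fintype X] [Fintype Y] {D : X → Y → ℤ}
    (hrow : ∀ x, ∑ y, D x y = 0) (hcol : ∀ y, ∑ x, D x y = 0) (hD : D ≠ 0) :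
    ∃ M : X → Y → ℤ, IsSimpleMove M ∧ M ≠ 0 ∧ IsConformal M D := by
  classical
  have pos_of_ne {x y} (h : D x y ≠ 0) : ∃ y', 0 < D x y' := by
    simpa using exists_pos_of_sum_zero_of_exists_nonzero (D x) (hrow x) ⟨y, mem_univ _, h⟩
  have neg_of_pos {x y} (h : 0 < D x y) : ∃ x', D x' y < 0 := by
    simpa using exists_pos_of_sum_zero_of_exists_nonzero (fun x => -D x y)
      (by simp [hcol y]) ⟨x, mem_univ _, by simpa using h.ne'⟩
  let S := {x // ∃ y, 0 < D x y}
  choose col hpos using fun x : S => x.2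
  have : ∀ x : S, ∃ x' : S, D x' (col x) < 0 := fun x => by
    obtain ⟨x', hx'⟩ := neg_of_pos (hpos x)
    exact ⟨⟨x', pos_of_ne hx'.ne⟩, hx'⟩
  choose next hneg using this
  obtain ⟨x, y, hxy⟩ : ∃ x y, D x y ≠ 0 := by simpa [funext_iff] using hD
  have : Nonempty S := ⟨⟨x, pos_of_ne hxy⟩⟩
  exact exists_conformal_of_cycle (C := (periodicPts next).toFinset) col
    (by simpa using periodicPts_nonempty next) Subtype.val_injective.injOn
    (by simpa using bijOn_periodicPts next) (fun i _ => hpos i) (fun i _ => hneg i)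

theorem card_eq_one_eq_card_eq_neg_one {ι R : Type*} [Fintype ι] [Ring R] [CharZero R]
    {v : ι → R} (hv : ∀ i, v i = -1 ∨ v i = 0 ∨ v i = 1) (hsum : ∑ i, v i = 0) :
    Nat.card {i // v i = 1} = Nat.card {i // v i = -1} := by
  classical
  have hv' : ∀ i, v i = (if v i = 1 then 1 else 0) - if v i = -1 then 1 else 0 := fun i => by
    rcases hv i with h | h | h <;> norm_num [h]
  rw [sum_congr rfl fun i _ => hv' i, sum_sub_distrib, sum_boole, sum_boole, sub_eq_zero,
    Nat.cast_inj] at hsum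
  simpa only [Nat.card_eq_fintype_card, Fintype.card_subtype] using hsum

theorem sum_sum_mul_eq_sum_sub_sum {X Y R : Type*} [Fintype X] [Fintype Y] [Ring R]
    [CharZero R] [DecidableEq R] (c : X → Y → R) {M : X → Y → R}
    (hM : ∀ x y, M x y = -1 ∨ M x y = 0 ∨ M x y = 1) :
    ∑ x, ∑ y, c x y * M x y =
      ∑ p : {p : X × Y // M p.1 p.2 = 1}, c p.1.1 p.1.2 -
        ∑ p : {p : X × Y // M p.1 p.2 = -1}, c p.1.1 p.1.2 := by
  have hcM : ∀ x y, c x y * M x y =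
      (if M x y = 1 then c x y else 0) - if M x y = -1 then c x y else 0 := fun x y => by
    rcases hM x y with h | h | h <;> norm_num [h]
  have hsub (r : R) : ∑ p : {p : X × Y // M p.1 p.2 = r}, c p.1.1 p.1.2 =
      ∑ x, ∑ y, if M x y = r then c x y else 0 := by
    rw [← sum_subtype (univ.filter fun p : X × Y => M p.1 p.2 = r) (fun _ => mem_filter_univ _)
      fun p => c p.1 p.2, sum_filter, Fintype.sum_prod_type]
  simp only [hcM, sum_sub_distrib, hsub]

theorem exists_equiv_fst_eq {α β : Type*} [Finite β] {R S : α → β → Prop}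
    (h : ∀ a, Nat.card {b // R a b} = Nat.card {b // S a b}) :
    ∃ e : {p : α × β // R p.1 p.2} ≃ {p : α × β // S p.1 p.2}, ∀ p, (e p).1.1 = p.1.1 :=
  ⟨(Equiv.subtypeProdEquivSigmaSubtype R).trans <|
      (Equiv.sigmaCongrRight fun a => (Finite.card_eq.1 (h a)).some).trans
        (Equiv.subtypeProdEquivSigmaSubtype S).symm, fun _ => rfl⟩

theorem exists_equiv_snd_eq {α β : Type*} [Finite α] {R S : α → β → Prop}
    (h : ∀ b, Nat.card {a // R a b} = Nat.card {a // S a b}) :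
    ∃ e : {p : α × β // R p.1 p.2} ≃ {p : α × β // S p.1 p.2}, ∀ p, (e p).1.2 = p.1.2 := by
  obtain ⟨e, he⟩ := exists_equiv_fst_eq (R := flip R) (S := flip S) h
  let swap (T : α → β → Prop) : {p : α × β // T p.1 p.2} ≃ {q : β × α // flip T q.1 q.2} :=
    (Equiv.prodComm α β).subtypeEquiv fun _ => Iff.rfl
  exact ⟨(swap R).trans (e.trans (swap S).symm), fun p => he (swap R p)⟩

section CyclicallyMonotone

variable {X : Type*} {c : X → X → ℝ} {G : Set (X × X)}

def SimpleMovesNonpos [Fintype X] (c : X → X → ℝ) (G : Set (X × X)) : Prop :=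
  ∀ M : X → X → ℝ, IsSimpleMove M → (∀ x y, 0 < M x y → (x, y) ∈ G) →
    ∑ x, ∑ y, c x y * M x y ≤ 0

theorem CyclicallyMonotone.sum_le_sum_perm (h : CyclicallyMonotone c G) {ι : Type*}
    [Fintype ι] (f : ι → X × X) (hf : ∀ i, f i ∈ G) (σ : Equiv.Perm ι) :
    ∑ i, c (f i).1 (f i).2 ≤ ∑ i, c (f i).1 (f (σ i)).2 := by
  let e := Fintype.equivFin ι
  have := h _ (f ∘ e.symm) (fun _ => hf _) (e.symm.trans (σ.trans e))
  simp only [comp_apply, Equiv.trans_apply, Equiv.symm_apply_apply] at this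
  rwa [e.symm.sum_comp fun i => c (f i).1 (f i).2,
    e.symm.sum_comp fun i => c (f i).1 (f (σ i)).2] at this

theorem CyclicallyMonotone.cost_nonpos [Fintype X] (h : CyclicallyMonotone c G)
    {M : X → X → ℝ} (hM : IsSimpleMove M) (hMG : ∀ x y, 0 < M x y → (x, y) ∈ G) :
    ∑ x, ∑ y, c x y * M x y ≤ 0 := by
  classical
  obtain ⟨φ, hφ⟩ := exists_equiv_fst_eq (R := fun x y => M x y = 1)
    (S := fun x y => M x y = -1) fun x => card_eq_one_eq_card_eq_neg_one (hM.mem x) (hM.row_sum x)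
  obtain ⟨ψ, hψ⟩ := exists_equiv_snd_eq (R := fun x y => M x y = 1)
    (S := fun x y => M x y = -1) fun y => card_eq_one_eq_card_eq_neg_one (hM.mem · y) (hM.col_sum y)
  have hψ' : ∀ n, (ψ.symm n).1.2 = n.1.2 := fun n => by simpa using (hψ (ψ.symm n)).symm
  rw [sum_sum_mul_eq_sum_sub_sum c hM.mem, sub_nonpos]
  calc ∑ p : {p : X × X // M p.1 p.2 = 1}, c p.1.1 p.1.2
      ≤ ∑ p, c p.1.1 ((φ.trans ψ.symm) p).1.2 :=
        h.sum_le_sum_perm (fun p : {p : X × X // M p.1 p.2 = 1} => p.1)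
          (fun p => hMG _ _ (p.2 ▸ one_pos)) _
    _ = ∑ p, c (φ p).1.1 (φ p).1.2 := by simp only [Equiv.trans_apply, hψ', hφ]
    _ = _ := φ.sum_comp fun n => c n.1.1 n.1.2

theorem SimpleMovesNonpos.cost_nonpos_of_balanced [Fintype X] (h : SimpleMovesNonpos c G)
    {D : X → X → ℤ} (hrow : ∀ x, ∑ y, D x y = 0) (hcol : ∀ y, ∑ x, D x y = 0)
    (hDG : ∀ x y, 0 < D x y → (x, y) ∈ G) : ∑ x, ∑ y, c x y * D x y ≤ 0 := by
  induction hn : ∑ x, ∑ y, (D x y).natAbs using Nat.strong_induction_on generalizing D with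
  | _ n ih =>
  by_cases hD : D = 0
  · simp [hD]
  obtain ⟨M, hM, hM0, hconf⟩ := exists_isSimpleMove_conformal hrow hcol hD
  have entry (x y) : (D x y - M x y).natAbs + (M x y).natAbs = (D x y).natAbs ∧
      (0 < D x y - M x y → 0 < D x y) := by
    have := hM.mem x y
    have := hconf x y
    omega
  obtain ⟨x₀, y₀, hM₀⟩ : ∃ x y, M x y ≠ 0 := by simpa [funext_iff] using hM0
  have hMpos : 0 < ∑ x, ∑ y, (M x y).natAbs :=
    sum_pos' (fun _ _ => Nat.zero_le _) ⟨x₀, mem_univ _,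
      sum_pos' (fun _ _ => Nat.zero_le _) ⟨y₀, mem_univ _, Int.natAbs_pos.2 hM₀⟩⟩
  have hsum : ∑ x, ∑ y, (D x y - M x y).natAbs + ∑ x, ∑ y, (M x y).natAbs = n := by
    simp only [← hn, ← sum_add_distrib, entry]
  have hrest := ih _ (by omega) (D := fun x y => D x y - M x y)
    (fun x => by simp [sum_sub_distrib, hrow, hM.row_sum])
    (fun y => by simp [sum_sub_distrib, hcol, hM.col_sum])
    (fun x y hxy => hDG x y ((entry x y).2 hxy)) rfl
  have hmove := h _ hM.intCast fun x y hxy => hDG x y ((hconf x y).1 (by exact_mod_cast hxy))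
  calc ∑ x, ∑ y, c x y * D x y
      = ∑ x, ∑ y, c x y * M x y + ∑ x, ∑ y, c x y * ↑(D x y - M x y) := by
        simp only [← sum_add_distrib, Int.cast_sub, mul_sub, add_sub_cancel]
    _ ≤ 0 := add_nonpos hmove hrest

theorem CyclicallyMonotone.of_simpleMovesNonpos [Fintype X] (h : SimpleMovesNonpos c G) :
    CyclicallyMonotone c G := by
  classical
  intro k f hf σ
  let g i : X × X := ((f i).1, (f (σ i)).2)
  have hcard (y : X) : #{i | (f (σ i)).2 = y} = #{i | (f i).2 = y} := by
    simp only [card_filter]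
    exact Equiv.sum_comp σ fun i => if (f i).2 = y then 1 else 0
  have hcost := h.cost_nonpos_of_balanced
    (D := fun x y => (pointCount univ f (x, y) : ℤ) - pointCount univ g (x, y))
    (fun x => by simp only [sum_sub_distrib, ← Nat.cast_sum, sum_pointCount_fst, g, sub_self])
    (fun y => by
      simp only [sum_sub_distrib, ← Nat.cast_sum, sum_pointCount_snd, g, hcard, sub_self])
    (fun x y hxy => by
      obtain ⟨i, -, hi⟩ := exists_eq_of_pointCount_pos univ f (z := (x, y)) (by omega)
      exact hi ▸ hf i)
  simp only [Int.cast_sub, Int.cast_natCast, mul_sub, sum_sub_distrib,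
    sum_sum_mul_pointCount] at hcost
  linarith

end CyclicallyMonotone

/-- `G ⊆ X × X` is `c`-cyclically monotone iff every simple move `M` with
`{M > 0} ⊆ G` has nonpositive `c`-cost. -/
theorem cyclicallyMonotone_iff_simple_moves_nonpos
    {X : Type*} [Fintype X] (c : X → X → ℝ) (G : Set (X × X)) :
    CyclicallyMonotone c G ↔
      ∀ M : X → X → ℝ,
        (∀ x y, M x y = -1 ∨ M x y = 0 ∨ M x y = 1) →
        (∀ x, ∑ y, M x y = 0) → (∀ y, ∑ x, M x y = 0) →
        (∀ x y, 0 < M x y → (x, y) ∈ G) →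
        ∑ x, ∑ y, c x y * M x y ≤ 0 :=
  ⟨fun h _ hmem hrow hcol => h.cost_nonpos ⟨hmem, hrow, hcol⟩,
    fun h => .of_simpleMovesNonpos fun M hM => h M hM.mem hM.row_sum hM.col_sum⟩
end

section
/- If d is a distance on X, μ(x̄)ν(x̄) > 0 for some x̄ ∈ X, and γ̃ is an optimal coupling for K_d(μ, ν) with γ̃(x̄, x̄) = 0, then there exists an optimal coupling γ̄ with γ̄(x̄, x̄) > 0 and γ̄(x, x) = γ̃(x, x) for all x ≠ x̄. -/
def IsCoupling {X : Type*} [Fintype X] (μ ν : X → ℝ) (γ : X → X → ℝ) : Prop :=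
  (∀ x y, 0 ≤ γ x y) ∧ (∀ x, ∑ y, γ x y = μ x) ∧ (∀ y, ∑ x, γ x y = ν y)

noncomputable def Kd {X : Type*} [Fintype X] (d : X → X → ℝ) (μ ν : X → ℝ) : ℝ :=
  sInf {r | ∃ γ, IsCoupling μ ν γ ∧ r = ∑ x, ∑ y, d x y * γ x y}

/-!
Since `μ x₀ ≠ 0 ≠ ν x₀` and `γ x₀ x₀ = 0`, the coupling `γ` sends mass from `x₀` to some `b ≠ x₀`
and from some `a ≠ x₀` to `x₀`. Moving `ε` of mass from `(x₀, b)` and `(a, x₀)` to `(x₀, x₀)` and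
`(a, b)` keeps the marginals and changes the cost by `ε (d a b - d x₀ b - d a x₀) ≤ 0`, so the new
coupling is again optimal. If `a = b` the change would be `-2 ε d a x₀ < 0`, contradicting
optimality; hence `a ≠ b`, and no diagonal entry other than `(x₀, x₀)` is touched.
-/

lemma nonneg_of_triangle {X : Type*} {d : X → X → ℝ} (hd_self : ∀ x, d x x = 0)
    (hd_symm : ∀ x y, d x y = d y x) (hd_tri : ∀ x y z, d x z ≤ d x y + d y z) (x y : X) :
    0 ≤ d x y := by
  linarith [hd_tri x y x, hd_self x, hd_symm x y]

section Transport

variable {X : Type*} [Fintype X]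

def transportCost (d γ : X → X → ℝ) : ℝ := ∑ x, ∑ y, d x y * γ x y

lemma Kd_le_transportCost {d γ : X → X → ℝ} {μ ν : X → ℝ} (hd : ∀ x y, 0 ≤ d x y)
    (hγ : IsCoupling μ ν γ) : Kd d μ ν ≤ transportCost d γ := by
  refine csInf_le ⟨0, ?_⟩ ⟨γ, hγ, rfl⟩
  rintro r ⟨γ', hγ', rfl⟩
  exact Finset.sum_nonneg fun x _ => Finset.sum_nonneg fun y _ => mul_nonneg (hd x y) (hγ'.1 x y)

lemma IsCoupling.exists_offDiag_pos_of_left_ne_zero {μ ν : X → ℝ} {γ : X → X → ℝ}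
    (hγ : IsCoupling μ ν γ) {x : X} (hμ : μ x ≠ 0) (hdiag : γ x x = 0) :
    ∃ y ≠ x, 0 < γ x y := by
  obtain ⟨y, -, hy⟩ := Finset.exists_ne_zero_of_sum_ne_zero (hγ.2.1 x ▸ hμ)
  exact ⟨y, fun h => hy (h ▸ hdiag), (hγ.1 x y).lt_of_ne' hy⟩

lemma IsCoupling.exists_offDiag_pos_of_right_ne_zero {μ ν : X → ℝ} {γ : X → X → ℝ}
    (hγ : IsCoupling μ ν γ) {y : X} (hν : ν y ≠ 0) (hdiag : γ y y = 0) :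
    ∃ x ≠ y, 0 < γ x y := by
  obtain ⟨x, -, hx⟩ := Finset.exists_ne_zero_of_sum_ne_zero (hγ.2.2 y ▸ hν)
  exact ⟨x, fun h => hx (h ▸ hdiag), (hγ.1 x y).lt_of_ne' hx⟩

lemma transportCost_add_smul (d γ η : X → X → ℝ) (ε : ℝ) :
    transportCost d (γ + ε • η) = transportCost d γ + ε * transportCost d η := by
  simp only [transportCost, Pi.add_apply, Pi.smul_apply, smul_eq_mul, mul_add,
    Finset.sum_add_distrib, Finset.mul_sum, mul_left_comm ε]

variable [DecidableEq X]

def diracDiff (x x' : X) : X → ℝ := Pi.single x 1 - Pi.single x' 1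

lemma sum_diracDiff (x x' : X) : ∑ u, diracDiff x x' u = 0 := by
  simp [diracDiff, Finset.sum_sub_distrib]

lemma sum_mul_diracDiff (φ : X → ℝ) (x x' : X) : ∑ u, φ u * diracDiff x x' u = φ x - φ x' := by
  simp [diracDiff, mul_sub, Finset.sum_sub_distrib, Pi.single_apply]

def rectMove (x x' y y' : X) : X → X → ℝ := fun u v => diracDiff x x' u * diracDiff y y' v

lemma transportCost_rectMove (d : X → X → ℝ) (x x' y y' : X) :
    transportCost d (rectMove x x' y y') = d x y - d x y' - d x' y + d x' y' :=
  calc transportCost d (rectMove x x' y y')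
      = ∑ u, (d u y - d u y') * diracDiff x x' u := by
        simp only [transportCost, rectMove, ← sum_mul_diracDiff, Finset.sum_mul]
        exact Finset.sum_congr rfl fun u _ => Finset.sum_congr rfl fun v _ => by ring
    _ = d x y - d x y' - d x' y + d x' y' := by rw [sum_mul_diracDiff]; ring

lemma IsCoupling.add_smul_rectMove {μ ν : X → ℝ} {γ : X → X → ℝ} (hγ : IsCoupling μ ν γ)
    {ε : ℝ} (hε : 0 ≤ ε) {x x' y y' : X} (hxy' : ε ≤ γ x y') (hx'y : ε ≤ γ x' y) :
    IsCoupling μ ν (γ + ε • rectMove x x' y y') := by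
  obtain ⟨hγ0, hrow, hcol⟩ := hγ
  refine ⟨fun u v => ?_, fun u => ?_, fun v => ?_⟩
  · have := hγ0 u v
    simp only [Pi.add_apply, Pi.smul_apply, smul_eq_mul, rectMove, diracDiff, Pi.sub_apply,
      Pi.single_apply]
    split_ifs <;> subst_vars <;> nlinarith
  · simp only [Pi.add_apply, Pi.smul_apply, smul_eq_mul, rectMove, Finset.sum_add_distrib,
      ← Finset.mul_sum, sum_diracDiff, hrow]
    ring
  · simp only [Pi.add_apply, Pi.smul_apply, smul_eq_mul, rectMove, Finset.sum_add_distrib,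
      ← Finset.mul_sum, ← Finset.sum_mul, sum_diracDiff, hcol]
    ring

end Transport

theorem optimal_coupling_positive_diagonal_general
    {X : Type*} [Fintype X] (d : X → X → ℝ)
    (hd_eq : ∀ x y, d x y = 0 ↔ x = y)
    (hd_symm : ∀ x y, d x y = d y x)
    (hd_tri : ∀ x y z, d x z ≤ d x y + d y z)
    (μ ν : X → ℝ)
    (x₀ : X) (hx₀ : 0 < μ x₀ * ν x₀)
    (γ : X → X → ℝ) (hγ : IsCoupling μ ν γ)
    (hγopt : ∑ x, ∑ y, d x y * γ x y = Kd d μ ν)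
    (hdiag : γ x₀ x₀ = 0) :
    ∃ γ' : X → X → ℝ, IsCoupling μ ν γ' ∧
      (∑ x, ∑ y, d x y * γ' x y = Kd d μ ν) ∧
      0 < γ' x₀ x₀ ∧ ∀ x, x ≠ x₀ → γ' x x = γ x x := by
  classical
  have hd_self : ∀ x, d x x = 0 := fun x => (hd_eq x x).2 rfl
  have hd_nonneg := nonneg_of_triangle hd_self hd_symm hd_tri
  obtain ⟨b, hb, hγb⟩ :=
    hγ.exists_offDiag_pos_of_left_ne_zero (left_ne_zero_of_mul hx₀.ne') hdiag
  obtain ⟨a, ha, hγa⟩ :=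
    hγ.exists_offDiag_pos_of_right_ne_zero (right_ne_zero_of_mul hx₀.ne') hdiag
  set ε := min (γ x₀ b) (γ a x₀)
  have hε : 0 < ε := lt_min hγb hγa
  set γ' := γ + ε • rectMove x₀ a x₀ b
  have hγ' : IsCoupling μ ν γ' := hγ.add_smul_rectMove hε.le (min_le_left _ _) (min_le_right _ _)
  have hcost : transportCost d γ' = Kd d μ ν + ε * (d a b - d x₀ b - d a x₀) := by
    rw [transportCost_add_smul, transportCost_rectMove, ← hγopt, hd_self]
    simp only [transportCost]
    ring
  have hopt : transportCost d γ' = Kd d μ ν :=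
    le_antisymm (by rw [hcost]; nlinarith [hd_tri a x₀ b]) (Kd_le_transportCost hd_nonneg hγ')
  have hab : a ≠ b := by
    rintro rfl
    have hpos : 0 < d a x₀ := (hd_nonneg a x₀).lt_of_ne' fun h => ha ((hd_eq a x₀).1 h)
    rw [hcost, hd_self, hd_symm x₀ a] at hopt
    nlinarith
  refine ⟨γ', hγ', hopt, ?_, fun x hx => ?_⟩
  · simp [γ', rectMove, diracDiff, hdiag, ha.symm, hb.symm, hε]
  · simp [γ', rectMove, diracDiff, Pi.single_apply, hx]
    exact fun hxb hxa => absurd (hxa.symm.trans hxb) hab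

/-- If `μ(x̄)ν(x̄) > 0` and `γ̃` is an optimal coupling with `γ̃(x̄,x̄) = 0`, then
there is an optimal coupling `γ̄` with `γ̄(x̄,x̄) > 0` and the same other diagonal
entries. -/
theorem optimal_coupling_positive_diagonal
    {X : Type*} [Fintype X] (d : X → X → ℝ)
    (hd_eq : ∀ x y, d x y = 0 ↔ x = y)
    (hd_symm : ∀ x y, d x y = d y x)
    (hd_tri : ∀ x y z, d x z ≤ d x y + d y z)
    (μ ν : X → ℝ)
    (hμ0 : ∀ x, 0 ≤ μ x) (hμ1 : ∑ x, μ x = 1)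
    (hν0 : ∀ x, 0 ≤ ν x) (hν1 : ∑ x, ν x = 1)
    (x₀ : X) (hx₀ : 0 < μ x₀ * ν x₀)
    (γ : X → X → ℝ) (hγ : IsCoupling μ ν γ)
    (hγopt : ∑ x, ∑ y, d x y * γ x y = Kd d μ ν)
    (hdiag : γ x₀ x₀ = 0) :
    ∃ γ' : X → X → ℝ, IsCoupling μ ν γ' ∧
      (∑ x, ∑ y, d x y * γ' x y = Kd d μ ν) ∧
      0 < γ' x₀ x₀ ∧ ∀ x, x ≠ x₀ → γ' x x = γ x x :=
  optimal_coupling_positive_diagonal_general d hd_eq hd_symm hd_tri μ ν x₀ hx₀ γ hγ hγopt hdiag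
end
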